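/- Let $\Omega \subset \mathbb{R}^N$ be a bounded domain, $2 < q < 3$, $\lambda_q = (q-1)/(q-2)$, $\phi \in H^1_0(\Omega)$ a weak solution of $-\Delta\phi = \lambda_q|\phi|^{q-2}\phi$, and $J'(u) = -\Delta u - \lambda_q|u|^{q-2}u \in H^{-1}(\Omega)$. Then for every $u \in H^1_0(\Omega)$: $\|J'(u) - \mathcal{L}_\phi(u - \phi)\|_{H^{-1}(\Omega)} \le \lambda_q(q-1) C_q \|u - \phi\|_{L^q(\Omega)}^{q-1}$, where $\mathcal{L}_\phi = -\Delta - \lambda_q(q-1)|\phi|^{q-2}$ and $C_q$ is the norm of the embedding $L^{q'}(\Omega) \hookrightarrow H^{-1}(\Omega)$. -/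

import Mathlib

/-!
With `g t = |t| ^ (q - 2) * t` the integrand is `g u - g φ - g' φ (u - φ)`. Since `q - 2 ≤ 1`,
`t ↦ |t| ^ (q - 2)` is `(q - 2)`-Hölder with constant `1`, so the mean value theorem bounds it by
`(q - 1) |u - φ| ^ (q - 1)`. Hölder's inequality with exponents `q / (q - 1)` and `q` then gives
`|F z| ≤ λ_q (q - 1) ‖u - φ‖_q ^ (q - 1) ‖T z‖_q`, and `‖T z‖_q ≤ Cq ‖z‖`.
-/

open MeasureTheory
open scoped RealInnerProductSpace

open Filter Asymptotics in
lemma hasDerivAt_abs_rpow_mul_self {s : ℝ} (hs : 0 < s) (t : ℝ) :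
    HasDerivAt (fun t : ℝ => |t| ^ s * t) ((s + 1) * |t| ^ s) t := by
  rcases eq_or_ne t 0 with rfl | ht
  · rw [abs_zero, Real.zero_rpow hs.ne', mul_zero, hasDerivAt_iff_isLittleO_nhds_zero]
    have hlim : Tendsto (fun h : ℝ => |h| ^ s) (nhds 0) (nhds 0) := by
      simpa [Real.zero_rpow hs.ne'] using
        (continuous_abs.rpow_const fun _ => Or.inr hs.le).tendsto (0 : ℝ)
    simpa [Real.zero_rpow hs.ne'] using
      (isLittleO_one_iff ℝ |>.mpr hlim).mul_isBigO (isBigO_refl (fun h : ℝ => h) _)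
  · refine (((hasDerivAt_abs ht).rpow_const (p := s) (Or.inl (abs_ne_zero.mpr ht))).mul
      (hasDerivAt_id' t)).congr_deriv ?_
    have hsign : (SignType.sign t : ℝ) * t = |t| := sign_mul_self t
    rw [Real.rpow_sub_one (abs_ne_zero.mpr ht)]
    calc ↑(SignType.sign t) * s * (|t| ^ s / |t|) * t + |t| ^ s * 1
        = s * |t| ^ s * (SignType.sign t * t / |t|) + |t| ^ s := by ring
      _ = (s + 1) * |t| ^ s := by rw [hsign, div_self (abs_ne_zero.mpr ht)]; ring

lemma Real.abs_rpow_sub_rpow_le {s x y : ℝ} (hs0 : 0 ≤ s) (hs1 : s ≤ 1) (hx : 0 ≤ x)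
    (hy : 0 ≤ y) :
    |x ^ s - y ^ s| ≤ |x - y| ^ s := by
  have key : ∀ {a b : ℝ}, 0 ≤ a → 0 ≤ b → a ^ s - b ^ s ≤ |a - b| ^ s :=
      fun {a b} ha hb => by
    have hab : a ≤ b + |a - b| := by linarith [le_abs_self (a - b)]
    linarith [Real.rpow_le_rpow ha hab hs0,
      Real.rpow_add_le_add_rpow hb (abs_nonneg (a - b)) hs0 hs1]
  rw [abs_sub_le_iff]
  exact ⟨key hx hy, abs_sub_comm x y ▸ key hy hx⟩

lemma abs_rpow_mul_self_sub_taylor_le {s : ℝ} (hs0 : 0 < s) (hs1 : s ≤ 1) (a b : ℝ) :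
    |(|a| ^ s * a - |b| ^ s * b - (s + 1) * |b| ^ s * (a - b))| ≤
      (s + 1) * |a - b| ^ (s + 1) := by
  have hderiv : ∀ t, HasDerivAt (fun t => |t| ^ s * t - (s + 1) * |b| ^ s * t)
      ((s + 1) * |t| ^ s - (s + 1) * |b| ^ s) t := fun t =>
    (hasDerivAt_abs_rpow_mul_self hs0 t).sub
      ((hasDerivAt_id' t).const_mul _ |>.congr_deriv (mul_one _))
  have hbound : ∀ t ∈ Set.uIcc b a,
      ‖(s + 1) * |t| ^ s - (s + 1) * |b| ^ s‖ ≤ (s + 1) * |a - b| ^ s := fun t ht => by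
    rw [← mul_sub, norm_mul, Real.norm_of_nonneg (by linarith), Real.norm_eq_abs]
    gcongr
    calc |(|t| ^ s - |b| ^ s)| ≤ |(|t| - |b|)| ^ s :=
          Real.abs_rpow_sub_rpow_le hs0.le hs1 (abs_nonneg t) (abs_nonneg b)
      _ ≤ |a - b| ^ s := Real.rpow_le_rpow (abs_nonneg _)
          ((abs_abs_sub_abs_le_abs_sub t b).trans (Set.abs_sub_left_of_mem_uIcc ht)) hs0.le
  have hmvt := Convex.norm_image_sub_le_of_norm_hasDerivWithin_le
    (fun t _ => (hderiv t).hasDerivWithinAt) hbound (convex_uIcc b a)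
    Set.left_mem_uIcc Set.right_mem_uIcc
  rw [Real.norm_eq_abs, Real.norm_eq_abs] at hmvt
  rw [Real.rpow_add_one' (abs_nonneg _) (by linarith), ← mul_assoc]
  convert hmvt using 2
  ring

section Holder

variable {α : Type*} [MeasurableSpace α] {μ : Measure α} {p : ℝ}

lemma MeasureTheory.MemLp.toReal_eLpNorm_eq_integral_abs_rpow {f : α → ℝ} (hp : 0 < p)
    (hf : MemLp f (ENNReal.ofReal p) μ) :
    (eLpNorm f (ENNReal.ofReal p) μ).toReal = (∫ x, |f x| ^ p ∂μ) ^ (1 / p) := by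
  rw [hf.eLpNorm_eq_integral_rpow_norm (by simpa using hp) ENNReal.ofReal_ne_top,
    ENNReal.toReal_ofReal (by positivity), ENNReal.toReal_ofReal hp.le, one_div]
  simp only [Real.norm_eq_abs]

lemma MeasureTheory.MemLp.abs_rpow_sub_one (hp : 1 < p) {w : α → ℝ}
    (hw : MemLp w (ENNReal.ofReal p) μ) :
    MemLp (fun x => |w x| ^ (p - 1)) (ENNReal.ofReal (p / (p - 1))) μ := by
  have hp1 : 0 < p - 1 := by linarith
  have := hw.norm_rpow_div (ENNReal.ofReal (p - 1))
  rwa [ENNReal.toReal_ofReal hp1.le, ← ENNReal.ofReal_div_of_pos hp1] at this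

lemma integral_abs_rpow_sub_one_mul_abs_le (hp : 1 < p) {w v : α → ℝ}
    (hw : MemLp w (ENNReal.ofReal p) μ) (hv : MemLp v (ENNReal.ofReal p) μ) :
    ∫ x, |w x| ^ (p - 1) * |v x| ∂μ ≤
      (eLpNorm w (ENNReal.ofReal p) μ).toReal ^ (p - 1)
        * (eLpNorm v (ENNReal.ofReal p) μ).toReal := by
  have hp1 : 0 < p - 1 := by linarith
  have hpq : (p / (p - 1)).HolderConjugate p := (Real.HolderConjugate.conjExponent hp).symm
  have hpow : ∀ x, (|w x| ^ (p - 1)) ^ (p / (p - 1)) = |w x| ^ p := fun x => by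
    rw [← Real.rpow_mul (abs_nonneg _), mul_div_cancel₀ _ hp1.ne']
  have hI : 0 ≤ ∫ x, |w x| ^ p ∂μ := integral_nonneg fun x => by positivity
  calc ∫ x, |w x| ^ (p - 1) * |v x| ∂μ
      ≤ (∫ x, ((|w x| ^ (p - 1)) ^ (p / (p - 1))) ∂μ) ^ (1 / (p / (p - 1)))
        * (∫ x, |v x| ^ p ∂μ) ^ (1 / p) :=
        integral_mul_le_Lp_mul_Lq_of_nonneg hpq (.of_forall fun x => by positivity)
          (.of_forall fun x => abs_nonneg _) (hw.abs_rpow_sub_one hp) hv.abs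
    _ = ((∫ x, |w x| ^ p ∂μ) ^ (1 / p)) ^ (p - 1) * (∫ x, |v x| ^ p ∂μ) ^ (1 / p) := by
        simp only [hpow]
        rw [← Real.rpow_mul hI]
        congr 2
        field_simp
    _ = _ := by
        rw [hw.toReal_eLpNorm_eq_integral_abs_rpow (by linarith),
          hv.toReal_eLpNorm_eq_integral_abs_rpow (by linarith)]

lemma abs_integral_mul_le_of_abs_le_rpow (hp : 1 < p) {G w v : α → ℝ} {K : ℝ} (hK : 0 ≤ K)
    (hG : ∀ x, |G x| ≤ K * |w x| ^ (p - 1))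
    (hw : MemLp w (ENNReal.ofReal p) μ) (hv : MemLp v (ENNReal.ofReal p) μ) :
    |∫ x, G x * v x ∂μ| ≤
      K * (eLpNorm w (ENNReal.ofReal p) μ).toReal ^ (p - 1)
        * (eLpNorm v (ENNReal.ofReal p) μ).toReal := by
  have : (ENNReal.ofReal (p / (p - 1))).HolderConjugate (ENNReal.ofReal p) :=
    (Real.HolderConjugate.conjExponent hp).symm.ennrealOfReal
  have hint : Integrable (fun x => |w x| ^ (p - 1) * |v x|) μ :=
    (hw.abs_rpow_sub_one hp).integrable_mul hv.abs
  calc |∫ x, G x * v x ∂μ|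
      ≤ ∫ x, |G x * v x| ∂μ := abs_integral_le_integral_abs
    _ ≤ ∫ x, K * (|w x| ^ (p - 1) * |v x|) ∂μ := by
        refine integral_mono_of_nonneg (.of_forall fun x => abs_nonneg _) (hint.const_mul K)
          (.of_forall fun x => ?_)
        dsimp only
        rw [abs_mul, ← mul_assoc]
        exact mul_le_mul_of_nonneg_right (hG x) (abs_nonneg _)
    _ ≤ K * ((eLpNorm w (ENNReal.ofReal p) μ).toReal ^ (p - 1)
          * (eLpNorm v (ENNReal.ofReal p) μ).toReal) := by
        rw [integral_const_mul]
        exact mul_le_mul_of_nonneg_left (integral_abs_rpow_sub_one_mul_abs_le hp hw hv) hK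
    _ = _ := (mul_assoc _ _ _).symm

end Holder

lemma mul_rpow_nonneg_of_le_mul {C D n r : ℝ} (hD : 0 ≤ D) (hn : 0 ≤ n) (hDC : D ≤ C * n)
    (hr : r ≠ 0) : 0 ≤ C * D ^ r := by
  rcases hD.eq_or_lt with rfl | hD
  · rw [Real.zero_rpow hr, mul_zero]
  · have := pos_of_mul_pos_left (hD.trans_le hDC) hn
    positivity

theorem stmt_13_general {N : ℕ} (Ω : Set (EuclideanSpace ℝ (Fin N)))
    (q : ℝ) (hq1 : 2 < q) (hq3 : q < 3)
    {H : Type*} [NormedAddCommGroup H] [InnerProductSpace ℝ H]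
    (T : H →ₗ[ℝ] (EuclideanSpace ℝ (Fin N) → ℝ))
    (hTLq : ∀ u : H, MemLp (T u) (ENNReal.ofReal q) (volume.restrict Ω))
    (Cq : ℝ)
    (hCq : ∀ u : H,
      (eLpNorm (T u) (ENNReal.ofReal q) (volume.restrict Ω)).toReal ≤ Cq * ‖u‖)
    (φ u : H)
    (F : H →L[ℝ] ℝ)
    (hF : ∀ z : H, F z = -((q - 1) / (q - 2))
      * ∫ x in Ω, (|T u x| ^ (q - 2) * T u x - |T φ x| ^ (q - 2) * T φ x
          - (q - 1) * |T φ x| ^ (q - 2) * (T u x - T φ x)) * T z x) :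
    ‖F‖ ≤ (q - 1) / (q - 2) * (q - 1) * Cq
        * ((eLpNorm (T u - T φ) (ENNReal.ofReal q) (volume.restrict Ω)).toReal) ^ (q - 1) := by
  set D := (eLpNorm (T u - T φ) (ENNReal.ofReal q) (volume.restrict Ω)).toReal
  have hq2 : 0 < q - 2 := by linarith
  have hq1' : 0 < q - 1 := by linarith
  have hCD : 0 ≤ Cq * D ^ (q - 1) :=
    mul_rpow_nonneg_of_le_mul ENNReal.toReal_nonneg (norm_nonneg (u - φ))
      (by simpa only [map_sub] using hCq (u - φ)) hq1'.ne'
  have hpt : ∀ x, |(|T u x| ^ (q - 2) * T u x - |T φ x| ^ (q - 2) * T φ x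
      - (q - 1) * |T φ x| ^ (q - 2) * (T u x - T φ x))|
        ≤ (q - 1) * |T u x - T φ x| ^ (q - 1) :=
    fun x => by
      simpa only [show q - 2 + 1 = q - 1 by ring] using
        abs_rpow_mul_self_sub_taylor_le (s := q - 2) hq2 (by linarith) (T u x) (T φ x)
  refine ContinuousLinearMap.opNorm_le_bound F
    (by simpa only [mul_assoc] using
      mul_nonneg (by positivity : 0 ≤ (q - 1) / (q - 2) * (q - 1)) hCD)
    fun z => ?_
  rw [Real.norm_eq_abs, hF z, abs_mul, abs_neg, abs_of_pos (by positivity)]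
  calc (q - 1) / (q - 2) * |∫ x in Ω, _|
      ≤ (q - 1) / (q - 2) * ((q - 1) * D ^ (q - 1)
          * (eLpNorm (T z) (ENNReal.ofReal q) (volume.restrict Ω)).toReal) := by
        gcongr
        exact abs_integral_mul_le_of_abs_le_rpow (by linarith) hq1'.le hpt
          ((hTLq u).sub (hTLq φ)) (hTLq z)
    _ ≤ (q - 1) / (q - 2) * ((q - 1) * D ^ (q - 1) * (Cq * ‖z‖)) := by
        gcongr
        exact hCq z
    _ = _ := by ring

/-- With `Ω`, `2 < q < 3`, `λ_q = (q-1)/(q-2)`, `H ≅ H¹₀(Ω)` (realized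
by `T`, with Sobolev constant `Cq`, whence `L^{q'}(Ω) ↪ H⁻¹(Ω)` with norm `Cq` by
duality), a weak solution `φ` of `-Δ φ = λ_q |φ|^(q-2) φ`, and any `u ∈ H¹₀(Ω)`:
`‖J'(u) - 𝓛_φ(u-φ)‖_{H⁻¹} ≤ λ_q (q-1) Cq ‖u-φ‖_{L^q}^{q-1}`.
The functional `J'(u) - 𝓛_φ(u-φ) ∈ H⁻¹(Ω)` is the continuous linear functional `F` with
`F z = -λ_q ∫ (|u|^(q-2)u - |φ|^(q-2)φ - (q-1)|φ|^(q-2)(u-φ)) z` (`hF`), and the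
`H⁻¹`-norm is the dual norm `‖F‖`. -/
theorem stmt_13 {N : ℕ} (Ω : Set (EuclideanSpace ℝ (Fin N)))
    (hΩopen : IsOpen Ω) (hΩconn : IsConnected Ω) (hΩbdd : Bornology.IsBounded Ω)
    (q : ℝ) (hq1 : 2 < q) (hq3 : q < 3)
    {H : Type*} [NormedAddCommGroup H] [InnerProductSpace ℝ H] [CompleteSpace H]
    (T : H →ₗ[ℝ] (EuclideanSpace ℝ (Fin N) → ℝ))
    (hTmeas : ∀ u : H, Measurable (T u))
    (hTLq : ∀ u : H, MemLp (T u) (ENNReal.ofReal q) (volume.restrict Ω))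
    (Cq : ℝ)
    (hCq : ∀ u : H,
      (eLpNorm (T u) (ENNReal.ofReal q) (volume.restrict Ω)).toReal ≤ Cq * ‖u‖)
    (φ u : H)
    (hφ : ∀ z : H, ⟪φ, z⟫ =
      (q - 1) / (q - 2) * ∫ x in Ω, |T φ x| ^ (q - 2) * T φ x * T z x)
    (F : H →L[ℝ] ℝ)
    (hF : ∀ z : H, F z = -((q - 1) / (q - 2))
      * ∫ x in Ω, (|T u x| ^ (q - 2) * T u x - |T φ x| ^ (q - 2) * T φ x
          - (q - 1) * |T φ x| ^ (q - 2) * (T u x - T φ x)) * T z x) :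
    ‖F‖ ≤ (q - 1) / (q - 2) * (q - 1) * Cq
        * ((eLpNorm (T u - T φ) (ENNReal.ofReal q) (volume.restrict Ω)).toReal) ^ (q - 1) :=
  stmt_13_general Ω q hq1 hq3 T hTLq Cq hCq φ u F hF
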